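/- For every β > 0, the function 𝔰^β is continuous on (0,∞), and for every t with 0 < t < 1/2 there exist constants 0 < c ≤ C < ∞ (with c depending only on β and C depending only on β and t) such that c·(τ (log τ)²)^{−1} ≤ 𝔰^β(τ) ≤ C·(τ (log τ)²)^{−1} for all 0 < τ ≤ t. -/

import Mathlib

open MeasureTheory Set

/-- `𝔰^β(τ) = 4π ∫₀^∞ β^u τ^{u-1} / Γ(u) du`. -/
noncomputable def sBeta (β τ : ℝ) : ℝ :=
  4 * Real.pi * ∫ u in Set.Ioi (0 : ℝ), β ^ u * τ ^ (u - 1) / Real.Gamma u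

/-!
Writing `τ^(u-1) = τ⁻¹ τ^u` gives `𝔰^β(τ) = 4π τ⁻¹ ∫₀^∞ (βτ)^u / Γ(u) du`; continuity follows by
dominated convergence, since `γ ↦ γ^u` is monotone for `u > 0`.

For small `τ` put `s = -log τ`, so that `τ^u = e^{-su}`. On `(0, 1]` we have
`u ≤ 1/Γ(u) ≤ e² u`, so the integral over `(0, 1]` is comparable to `∫ u e^{-su} du = 1/s²`:
from below through the contribution of `[1/(4s), 1/(2s)]`, from above directly. On `(1, ∞)` the
integrand is at most `τ β^u / Γ(u)`, which is integrable because `1/Γ` decays faster than any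
exponential, and `τ ≤ 2/s²`.
-/

open Real

namespace Real

lemma exp_neg_add_one_mul_rpow_le_Gamma {x M : ℝ} (hx : 1 ≤ x) (hM : 0 ≤ M) :
    exp (-(M + 1)) * M ^ (x - 1) ≤ Gamma x := by
  have hx0 : 0 < x := by linarith
  have hint := GammaIntegral_convergent hx0
  have hsub : Ioc M (M + 1) ⊆ Ioi 0 := fun t ht => hM.trans_lt ht.1
  rw [Gamma_eq_integral hx0]
  calc exp (-(M + 1)) * M ^ (x - 1)
      = exp (-(M + 1)) * M ^ (x - 1) * volume.real (Ioc M (M + 1)) := by simp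
    _ ≤ ∫ t in Ioc M (M + 1), exp (-t) * t ^ (x - 1) :=
        setIntegral_ge_of_const_le_real measurableSet_Ioc (by simp)
          (fun t ⟨hMt, htM⟩ => by gcongr) (hint.mono_set hsub)
    _ ≤ ∫ t in Ioi 0, exp (-t) * t ^ (x - 1) :=
        setIntegral_mono_set hint
          (ae_restrict_of_forall_mem measurableSet_Ioi fun t (ht : 0 < t) => by positivity)
          hsub.eventuallyLE

lemma inv_Gamma_le_exp_two_mul {u : ℝ} (hu : 0 < u) : (Gamma u)⁻¹ ≤ exp 2 * u := by
  have h := exp_neg_add_one_mul_rpow_le_Gamma (x := u + 1) (M := 1) (by linarith) zero_le_one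
  rw [one_rpow, mul_one, Gamma_add_one hu.ne', show -((1 : ℝ) + 1) = -2 by norm_num,
    exp_neg] at h
  rw [inv_le_iff_one_le_mul₀ (Gamma_pos_of_pos hu)]
  calc (1 : ℝ) = exp 2 * (exp 2)⁻¹ := (mul_inv_cancel₀ (exp_pos 2).ne').symm
    _ ≤ exp 2 * (u * Gamma u) := by gcongr
    _ = _ := by ring

lemma Gamma_add_one_le_one {u : ℝ} (hu : 0 ≤ u) (hu1 : u ≤ 1) : Gamma (u + 1) ≤ 1 := by
  have hmem : u + 1 ∈ segment ℝ (1 : ℝ) 2 := by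
    rw [segment_eq_Icc one_le_two]
    constructor <;> linarith
  simpa [Gamma_one, Gamma_two] using
    convexOn_Gamma.le_on_segment (mem_Ioi.2 one_pos) (mem_Ioi.2 two_pos) hmem

lemma le_inv_Gamma {u : ℝ} (hu : 0 < u) (hu1 : u ≤ 1) : u ≤ (Gamma u)⁻¹ := by
  have h := Gamma_add_one_le_one hu.le hu1
  rw [Gamma_add_one hu.ne'] at h
  rwa [le_inv_comm₀ hu (Gamma_pos_of_pos hu), inv_eq_one_div, le_div_iff₀ hu, mul_comm]

lemma min_one_le_rpow {x u : ℝ} (hx : 0 < x) (hu0 : 0 ≤ u) (hu1 : u ≤ 1) : min 1 x ≤ x ^ u := by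
  rcases le_total 1 x with h | h
  · exact (min_le_left _ _).trans (one_le_rpow h hu0)
  · exact (min_le_right _ _).trans
      (by simpa using rpow_le_rpow_of_exponent_ge hx h hu1)

lemma rpow_le_max_one {x u : ℝ} (hx : 0 ≤ x) (hu0 : 0 ≤ u) (hu1 : u ≤ 1) : x ^ u ≤ max 1 x := by
  rcases le_total 1 x with h | h
  · exact (by simpa using rpow_le_rpow_of_exponent_le h hu1 : x ^ u ≤ x).trans (le_max_right _ _)
  · exact (rpow_le_one hx h hu0).trans (le_max_left _ _)

lemma continuousOn_rpow_div_Gamma {γ : ℝ} (hγ : γ ≠ 0) :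
    ContinuousOn (fun u : ℝ => γ ^ u / Gamma u) (Ioi 0) := by
  refine ContinuousOn.div (continuous_const_rpow hγ).continuousOn ?_
    fun u hu => (Gamma_pos_of_pos hu).ne'
  intro u hu
  refine (differentiableAt_Gamma fun m hm => ?_).continuousAt.continuousWithinAt
  have : (0 : ℝ) < u := hu
  linarith [hm ▸ this, (Nat.cast_nonneg m : (0 : ℝ) ≤ m)]

lemma integrableOn_rpow_div_Gamma {γ : ℝ} (hγ : 0 < γ) :
    IntegrableOn (fun u : ℝ => γ ^ u / Gamma u) (Ioi 0) := by
  have hcont := continuousOn_rpow_div_Gamma hγ.ne'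
  rw [← Ioc_union_Ioi_eq_Ioi zero_le_one]
  refine IntegrableOn.union ?_ ?_
  · refine Integrable.of_bound
      ((hcont.mono Ioc_subset_Ioi_self).aestronglyMeasurable measurableSet_Ioc)
      (max 1 γ * exp 2) ?_
    filter_upwards [ae_restrict_mem measurableSet_Ioc] with u ⟨hu0, hu1⟩
    rw [norm_of_nonneg (by positivity), div_eq_mul_inv]
    gcongr
    · exact rpow_le_max_one hγ.le hu0.le hu1
    · calc (Gamma u)⁻¹ ≤ exp 2 * u := inv_Gamma_le_exp_two_mul hu0
        _ ≤ exp 2 := by nlinarith [exp_pos 2]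
  -- with `M = e γ`, the bound `Γ u ≥ e^{-(M+1)} M^{u-1}` makes `γ^u / Γ u` decay like `e^{-u}`
  · obtain ⟨M, hMdef⟩ : ∃ M, M = exp 1 * γ := ⟨_, rfl⟩
    have hM : 0 < M := by rw [hMdef]; positivity
    refine ((integrableOn_exp_neg_Ioi 1).const_mul (exp (M + 1) * M)).mono'
      ((hcont.mono fun u (hu : 1 < u) => zero_lt_one.trans hu).aestronglyMeasurable
        measurableSet_Ioi) ?_
    filter_upwards [ae_restrict_mem measurableSet_Ioi] with u (hu : 1 < u)
    have hu0 : 0 < u := zero_lt_one.trans hu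
    have hΓ := exp_neg_add_one_mul_rpow_le_Gamma hu.le hM.le
    rw [norm_of_nonneg (by positivity)]
    calc γ ^ u / Gamma u ≤ γ ^ u / (exp (-(M + 1)) * M ^ (u - 1)) := by gcongr
      _ = exp (M + 1) * M * (γ / M) ^ u := by
        rw [div_rpow hγ.le hM.le, rpow_sub hM, rpow_one, exp_neg]
        field_simp
      _ = exp (M + 1) * M * exp (-u) := by
        rw [show γ / M = exp (-1) by rw [hMdef, exp_neg]; field_simp, ← exp_mul, neg_one_mul]

lemma continuousOn_integral_rpow_div_Gamma :
    ContinuousOn (fun γ : ℝ => ∫ u in Ioi 0, γ ^ u / Gamma u) (Ioi 0) := by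
  intro γ₀ (hγ₀ : 0 < γ₀)
  refine (continuousAt_of_dominated (bound := fun u => (2 * γ₀) ^ u / Gamma u) ?_ ?_
    (integrableOn_rpow_div_Gamma (by positivity)) ?_).continuousWithinAt
  · filter_upwards [lt_mem_nhds hγ₀] with γ hγ
    exact (integrableOn_rpow_div_Gamma hγ).aestronglyMeasurable
  · filter_upwards [Ioo_mem_nhds (half_lt_self hγ₀) (by linarith : γ₀ < 2 * γ₀)] with γ hγ
    filter_upwards [ae_restrict_mem measurableSet_Ioi] with u (hu : 0 < u)
    have hγpos : 0 < γ := (half_pos hγ₀).trans hγ.1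
    rw [norm_of_nonneg (by positivity)]
    gcongr
    exact hγ.2.le
  · filter_upwards [ae_restrict_mem measurableSet_Ioi] with u (hu : 0 < u)
    exact (continuousAt_rpow_const _ _ (Or.inr hu.le)).div_const _

lemma integrableOn_mul_exp_neg_mul_Ioi {r : ℝ} (hr : 0 < r) :
    IntegrableOn (fun t : ℝ => t * exp (-(r * t))) (Ioi 0) := by
  simpa [neg_mul] using integrableOn_rpow_mul_exp_neg_mul_rpow (s := 1) (p := 1) (by norm_num)
    one_pos hr

lemma integral_mul_exp_neg_mul_Ioi {r : ℝ} (hr : 0 < r) :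
    ∫ t in Ioi 0, t * exp (-(r * t)) = (r ^ 2)⁻¹ := by
  simpa [Gamma_two, show (2 : ℝ) - 1 = 1 by norm_num] using
    integral_rpow_mul_exp_neg_mul_Ioi two_pos hr

lemma mul_log_sq_le_two {τ : ℝ} (hτ : 0 < τ) (hτ1 : τ ≤ 1) : τ * log τ ^ 2 ≤ 2 := by
  have h := pow_div_factorial_le_exp _ (neg_nonneg.2 (log_nonpos hτ.le hτ1)) 2
  rw [exp_neg, exp_log hτ, neg_sq, Nat.factorial_two, Nat.cast_two,
    div_le_iff₀ two_pos, le_inv_mul_iff₀ hτ] at h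
  linarith

end Real

lemma sBeta_eq {β τ : ℝ} (hβ : 0 ≤ β) (hτ : 0 < τ) :
    sBeta β τ = 4 * π * τ⁻¹ * ∫ u in Ioi 0, (β * τ) ^ u / Gamma u := by
  have h (u : ℝ) : β ^ u * τ ^ (u - 1) / Gamma u = τ⁻¹ * ((β * τ) ^ u / Gamma u) := by
    rw [mul_rpow hβ hτ.le, rpow_sub hτ, rpow_one]
    ring
  simp_rw [sBeta, h, integral_const_mul]
  ring

lemma continuousOn_sBeta {β : ℝ} (hβ : 0 < β) : ContinuousOn (sBeta β) (Ioi 0) := by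
  refine ContinuousOn.congr (f := fun τ => 4 * π * τ⁻¹ * ∫ u in Ioi 0, (β * τ) ^ u / Gamma u)
    ?_ fun τ hτ => sBeta_eq hβ.le hτ
  refine (continuousOn_const.mul (continuousOn_inv₀.mono fun τ (hτ : 0 < τ) => hτ.ne')).mul
    (continuousOn_integral_rpow_div_Gamma.comp (continuousOn_const.mul continuousOn_id) ?_)
  exact fun τ (hτ : 0 < τ) => mul_pos hβ hτ

lemma div_log_sq_le_integral_rpow_div_Gamma {β τ : ℝ} (hβ : 0 < β) (hτ : 0 < τ)
    (hτs : log τ ≤ -(1 / 2)) :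
    min 1 β * exp (-(1 / 2)) / 16 / log τ ^ 2 ≤ ∫ u in Ioi 0, (β * τ) ^ u / Gamma u := by
  set s := -log τ with hs_def
  have hs : 1 / 2 ≤ s := by linarith
  have hs0 : 0 < s := by linarith
  have ha : 0 < (4 * s)⁻¹ := by positivity
  have hab : (4 * s)⁻¹ ≤ (2 * s)⁻¹ := inv_anti₀ (by positivity) (by linarith)
  have hb : (2 * s)⁻¹ ≤ 1 := inv_le_one_of_one_le₀ (by linarith)
  have hsub : Icc (4 * s)⁻¹ (2 * s)⁻¹ ⊆ Ioi 0 := fun u hu => ha.trans_le hu.1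
  have hint := integrableOn_rpow_div_Gamma (mul_pos hβ hτ)
  have hpt : ∀ u ∈ Icc (4 * s)⁻¹ (2 * s)⁻¹,
      min 1 β * exp (-(1 / 2)) * (4 * s)⁻¹ ≤ (β * τ) ^ u / Gamma u := by
    rintro u ⟨hau, hub⟩
    have hu0 : 0 < u := ha.trans_le hau
    have hsu : s * u ≤ 1 / 2 := by
      calc s * u ≤ s * (2 * s)⁻¹ := by gcongr
        _ = 1 / 2 := by field_simp
    rw [mul_rpow hβ.le hτ.le, rpow_def_of_pos hτ, div_eq_mul_inv _ (Gamma u)]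
    gcongr ?_ * exp ?_ * ?_
    · exact min_one_le_rpow hβ hu0.le (hub.trans hb)
    · linarith
    · exact hau.trans (le_inv_Gamma hu0 (hub.trans hb))
  calc min 1 β * exp (-(1 / 2)) / 16 / log τ ^ 2
      = min 1 β * exp (-(1 / 2)) * (4 * s)⁻¹ * volume.real (Icc (4 * s)⁻¹ (2 * s)⁻¹) := by
        rw [volume_real_Icc_of_le hab, show log τ = -s by ring]
        field_simp
        ring
    _ ≤ ∫ u in Icc (4 * s)⁻¹ (2 * s)⁻¹, (β * τ) ^ u / Gamma u :=
        setIntegral_ge_of_const_le_real measurableSet_Icc (by simp) hpt (hint.mono_set hsub)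
    _ ≤ ∫ u in Ioi 0, (β * τ) ^ u / Gamma u :=
        setIntegral_mono_set hint
          (ae_restrict_of_forall_mem measurableSet_Ioi fun u (hu : 0 < u) => by positivity)
          hsub.eventuallyLE

lemma integral_rpow_div_Gamma_le_div_log_sq {β τ : ℝ} (hβ : 0 < β) (hτ : 0 < τ) (hτ1 : τ < 1) :
    ∫ u in Ioi 0, (β * τ) ^ u / Gamma u ≤
      (max 1 β * exp 2 + 2 * ∫ u in Ioi 1, β ^ u / Gamma u) / log τ ^ 2 := by
  set s := -log τ with hs_def
  have hs0 : 0 < s := neg_pos.2 (log_neg hτ hτ1)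
  have hint := integrableOn_rpow_div_Gamma (mul_pos hβ hτ)
  set K := ∫ u in Ioi 1, β ^ u / Gamma u
  have hK : 0 ≤ K := setIntegral_nonneg measurableSet_Ioi fun u (hu : 1 < u) => by
    have := zero_lt_one.trans hu
    positivity
  have hsmall : ∫ u in Ioc 0 1, (β * τ) ^ u / Gamma u ≤ max 1 β * exp 2 / s ^ 2 := by
    have hg : IntegrableOn (fun u => max 1 β * exp 2 * (u * exp (-(s * u)))) (Ioi 0) :=
      (integrableOn_mul_exp_neg_mul_Ioi hs0).const_mul _
    calc ∫ u in Ioc 0 1, (β * τ) ^ u / Gamma u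
        ≤ ∫ u in Ioc 0 1, max 1 β * exp 2 * (u * exp (-(s * u))) := by
          refine setIntegral_mono_on (hint.mono_set Ioc_subset_Ioi_self)
            (hg.mono_set Ioc_subset_Ioi_self) measurableSet_Ioc fun u ⟨hu0, hu1⟩ => ?_
          rw [mul_rpow hβ.le hτ.le, rpow_def_of_pos hτ, div_eq_mul_inv _ (Gamma u)]
          calc β ^ u * exp (log τ * u) * (Gamma u)⁻¹
              ≤ max 1 β * exp (log τ * u) * (exp 2 * u) := by
                gcongr ?_ * _ * ?_
                exacts [rpow_le_max_one hβ.le hu0.le hu1, inv_Gamma_le_exp_two_mul hu0]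
            _ = max 1 β * exp 2 * (u * exp (-(s * u))) := by
                rw [show -(s * u) = log τ * u by rw [hs_def]; ring]
                ring
      _ ≤ ∫ u in Ioi 0, max 1 β * exp 2 * (u * exp (-(s * u))) :=
          setIntegral_mono_set hg
            (ae_restrict_of_forall_mem measurableSet_Ioi fun u (hu : 0 < u) => by positivity)
            Ioc_subset_Ioi_self.eventuallyLE
      _ = max 1 β * exp 2 / s ^ 2 := by
          rw [integral_const_mul, integral_mul_exp_neg_mul_Ioi hs0, div_eq_mul_inv]
  have hlarge : ∫ u in Ioi 1, (β * τ) ^ u / Gamma u ≤ 2 * K / s ^ 2 := by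
    have hτs : τ ≤ 2 / s ^ 2 := by
      rw [le_div_iff₀ (by positivity), hs_def, neg_sq]
      exact mul_log_sq_le_two hτ hτ1.le
    calc ∫ u in Ioi 1, (β * τ) ^ u / Gamma u ≤ ∫ u in Ioi 1, τ * (β ^ u / Gamma u) := by
          refine setIntegral_mono_on (hint.mono_set (Ioi_subset_Ioi zero_le_one))
            (((integrableOn_rpow_div_Gamma hβ).mono_set (Ioi_subset_Ioi zero_le_one)).const_mul τ)
            measurableSet_Ioi fun u (hu : 1 < u) => ?_
          have hu0 : 0 < u := zero_lt_one.trans hu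
          rw [mul_rpow hβ.le hτ.le, mul_div_assoc', mul_comm τ]
          gcongr
          simpa using rpow_le_rpow_of_exponent_ge hτ hτ1.le hu.le
      _ = τ * K := integral_const_mul _ _
      _ ≤ 2 / s ^ 2 * K := by gcongr
      _ = 2 * K / s ^ 2 := by ring
  rw [← Ioc_union_Ioi_eq_Ioi zero_le_one, setIntegral_union (Ioc_disjoint_Ioi le_rfl)
    measurableSet_Ioi (hint.mono_set Ioc_subset_Ioi_self)
    (hint.mono_set (Ioi_subset_Ioi zero_le_one)), show log τ ^ 2 = s ^ 2 by rw [hs_def, neg_sq],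
    add_div]
  exact add_le_add hsmall hlarge

lemma exists_pos_mul_le_sBeta {β : ℝ} (hβ : 0 < β) :
    ∃ c, 0 < c ∧ ∀ τ, 0 < τ → τ < 1 / 2 → c * (τ * log τ ^ 2)⁻¹ ≤ sBeta β τ := by
  refine ⟨4 * π * (min 1 β * exp (-(1 / 2)) / 16), by positivity, fun τ hτ hτ2 => ?_⟩
  have hlog : log τ ≤ -(1 / 2) := by
    have := log_lt_log hτ hτ2
    rw [one_div, log_inv] at this
    linarith [log_two_gt_d9]
  calc 4 * π * (min 1 β * exp (-(1 / 2)) / 16) * (τ * log τ ^ 2)⁻¹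
      = 4 * π * τ⁻¹ * (min 1 β * exp (-(1 / 2)) / 16 / log τ ^ 2) := by ring
    _ ≤ sBeta β τ := by
      rw [sBeta_eq hβ.le hτ]
      gcongr
      exact div_log_sq_le_integral_rpow_div_Gamma hβ hτ hlog

lemma exists_sBeta_le_mul {β : ℝ} (hβ : 0 < β) :
    ∃ C, ∀ τ, 0 < τ → τ < 1 → sBeta β τ ≤ C * (τ * log τ ^ 2)⁻¹ := by
  refine ⟨4 * π * (max 1 β * exp 2 + 2 * ∫ u in Ioi 1, β ^ u / Gamma u), fun τ hτ hτ1 => ?_⟩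
  calc sBeta β τ = 4 * π * τ⁻¹ * ∫ u in Ioi 0, (β * τ) ^ u / Gamma u := sBeta_eq hβ.le hτ
    _ ≤ 4 * π * τ⁻¹ * ((max 1 β * exp 2 + 2 * ∫ u in Ioi 1, β ^ u / Gamma u) / log τ ^ 2) := by
      gcongr
      exact integral_rpow_div_Gamma_le_div_log_sq hβ hτ hτ1
    _ = _ := by ring

/-- `𝔰^β` is continuous on `(0,∞)`, and for every `0 < t < 1/2` it is comparable to
`(τ (log τ)²)⁻¹` on `(0, t]`, with the lower constant depending only on `β` and the upper
constant depending only on `β` and `t`. -/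
theorem stmt2 (β : ℝ) (hβ : 0 < β) :
    ContinuousOn (sBeta β) (Set.Ioi 0) ∧
    ∃ c : ℝ, 0 < c ∧ ∀ t : ℝ, 0 < t → t < 1 / 2 →
      ∃ C : ℝ, c ≤ C ∧ ∀ τ : ℝ, 0 < τ → τ ≤ t →
        c * (τ * (Real.log τ) ^ 2)⁻¹ ≤ sBeta β τ ∧
        sBeta β τ ≤ C * (τ * (Real.log τ) ^ 2)⁻¹ := by
  obtain ⟨c, hc, hlower⟩ := exists_pos_mul_le_sBeta hβ
  obtain ⟨C, hupper⟩ := exists_sBeta_le_mul hβ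
  refine ⟨continuousOn_sBeta hβ, c, hc, fun t _ ht =>
    ⟨max c C, le_max_left c C, fun τ hτ hτt => ?_⟩⟩
  have hτ2 : τ < 1 / 2 := hτt.trans_lt ht
  refine ⟨hlower τ hτ hτ2, (hupper τ hτ (by linarith)).trans ?_⟩
  gcongr
  exact le_max_right c C
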